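/- arXiv:2507.19528 — 2 statements merged into one kernel-verified Lean document; each statement's English description precedes it below -/
import Mathlib

section
/- There exists an absolute constant c > 0 such that for all positive integers n, m, k, l and each sign σ ∈ {+1, −1}, if √n + √m + σ·√k − √l ≠ 0 then |√n + √m + σ·√k − √l| ≥ c · max(n, m, k, l)^{−7/2}. -/
/-!
Write a sum of integer square roots as `S = u + v` and multiply by the conjugate `u - v`:
`S * (u - v) = u ^ 2 - v ^ 2`, and for up to four terms `u ^ 2 - v ^ 2` is again a sum of one
fewer integer square roots, now of size at most `2 R ^ 2`, while `|u - v| ≤ t R`. Hence the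
exponent `e t` in `|S| ≫ R ^ (-e t)` satisfies `e (t + 1) = 2 e t + 1`, which gives `e 4 = 7`.
If the conjugate vanishes, then `S = 2 u` has fewer terms.
-/

open Real

/-- `x = ±√z` for some integer `z`. -/
def IsIntSqrt (x : ℝ) : Prop := x ^ 2 ∈ (Int.castRingHom ℝ).range

namespace IsIntSqrt

variable {x y : ℝ}

lemma of_mem_range (hx : x ∈ (Int.castRingHom ℝ).range) : IsIntSqrt x := pow_mem hx 2

lemma mul (hx : IsIntSqrt x) (hy : IsIntSqrt y) : IsIntSqrt (x * y) := by
  rw [IsIntSqrt, mul_pow]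
  exact mul_mem hx hy

lemma neg (hx : IsIntSqrt x) : IsIntSqrt (-x) := by
  rwa [IsIntSqrt, neg_sq]

lemma two_mul (hx : IsIntSqrt x) : IsIntSqrt (2 * x) :=
  (of_mem_range ⟨2, by simp⟩).mul hx

lemma one_le_abs (hx : IsIntSqrt x) (h : x ≠ 0) : 1 ≤ |x| := by
  obtain ⟨z, hz⟩ := hx
  rw [eq_intCast] at hz
  have hz0 : z ≠ 0 := Int.cast_ne_zero.mp (hz ▸ pow_ne_zero 2 h)
  rw [← one_le_sq_iff_one_le_abs, ← abs_of_nonneg (sq_nonneg x), ← hz]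
  exact_mod_cast Int.one_le_abs hz0

end IsIntSqrt

lemma isIntSqrt_sqrt_natCast (n : ℕ) : IsIntSqrt √n := by
  rw [IsIntSqrt, sq_sqrt n.cast_nonneg]
  exact ⟨n, by simp⟩

lemma one_le_mul_mul_abs_of_mul_eq {S P T B C : ℝ} (h : S * P = T) (hP : |P| ≤ B)
    (hT : 1 ≤ C * |T|) : 1 ≤ C * B * |S| := by
  have hC : 0 ≤ C := by nlinarith [abs_nonneg T]
  calc 1 ≤ C * |T| := hT
    _ = C * (|P| * |S|) := by rw [← h, abs_mul, mul_comm |S|]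
    _ ≤ C * B * |S| := by rw [← mul_assoc]; gcongr

section SumOfIntSqrts

variable {a b c d R : ℝ}

lemma one_le_mul_abs_add (ha : IsIntSqrt a) (hb : IsIntSqrt b) (haR : |a| ≤ R) (hbR : |b| ≤ R)
    (hS : a + b ≠ 0) : 1 ≤ 2 * R * |a + b| := by
  by_cases hP : a - b = 0
  · have ha0 : a ≠ 0 := fun h ↦ hS (by linarith)
    have h1 := ha.one_le_abs ha0
    rw [show a + b = 2 * a by linarith, abs_mul, abs_two]
    nlinarith
  · have hT : IsIntSqrt ((a + b) * (a - b)) := by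
      rw [show (a + b) * (a - b) = a ^ 2 - b ^ 2 by ring]
      exact .of_mem_range (sub_mem ha hb)
    have hPR : |a - b| ≤ 2 * R := (abs_sub a b).trans (by linarith)
    calc 1 ≤ |(a + b) * (a - b)| := hT.one_le_abs (mul_ne_zero hS hP)
      _ = |a - b| * |a + b| := by rw [abs_mul, mul_comm]
      _ ≤ 2 * R * |a + b| := by gcongr

lemma abs_two_mul_mul_le (ha : |a| ≤ R) (hb : |b| ≤ R) : |2 * (a * b)| ≤ 2 * R ^ 2 := by
  rw [abs_mul, abs_two, abs_mul, sq]
  gcongr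
  exact (abs_nonneg a).trans ha

lemma one_le_mul_abs_add_add (ha : IsIntSqrt a) (hb : IsIntSqrt b) (hc : IsIntSqrt c)
    (haR : |a| ≤ R) (hbR : |b| ≤ R) (hcR : |c| ≤ R) (hS : a + b + c ≠ 0) :
    1 ≤ 12 * R ^ 3 * |a + b + c| := by
  obtain ⟨ha₁, ha₂⟩ := abs_le.mp haR
  obtain ⟨hb₁, hb₂⟩ := abs_le.mp hbR
  obtain ⟨hc₁, hc₂⟩ := abs_le.mp hcR
  by_cases hP : a + b - c = 0
  · have hc0 : c ≠ 0 := by rintro rfl; exact hS (by linarith)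
    have hc1 := hc.one_le_abs hc0
    have hR : 1 ≤ R ^ 3 := one_le_pow₀ (hc1.trans hcR)
    rw [show a + b + c = 2 * c by linarith, abs_mul, abs_two]
    nlinarith
  · have hSP : (a + b + c) * (a + b - c) = (a ^ 2 + b ^ 2 - c ^ 2) + 2 * (a * b) := by ring
    have hT := one_le_mul_abs_add (.of_mem_range (sub_mem (add_mem ha hb) hc))
      (ha.mul hb).two_mul ?_ (abs_two_mul_mul_le haR hbR) (hSP ▸ mul_ne_zero hS hP)
    · calc 1 ≤ 2 * (2 * R ^ 2) * (3 * R) * |a + b + c| :=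
            one_le_mul_mul_abs_of_mul_eq hSP (abs_le.mpr ⟨by linarith, by linarith⟩) hT
        _ = 12 * R ^ 3 * |a + b + c| := by ring
    · refine abs_le.mpr ⟨?_, ?_⟩ <;>
        nlinarith [sq_le_sq' ha₁ ha₂, sq_le_sq' hb₁ hb₂, sq_le_sq' hc₁ hc₂]

lemma one_le_mul_abs_add_add_add (ha : IsIntSqrt a) (hb : IsIntSqrt b) (hc : IsIntSqrt c)
    (hd : IsIntSqrt d) (haR : |a| ≤ R) (hbR : |b| ≤ R) (hcR : |c| ≤ R) (hdR : |d| ≤ R)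
    (hS : a + b + c + d ≠ 0) : 1 ≤ 384 * R ^ 7 * |a + b + c + d| := by
  obtain ⟨ha₁, ha₂⟩ := abs_le.mp haR
  obtain ⟨hb₁, hb₂⟩ := abs_le.mp hbR
  obtain ⟨hc₁, hc₂⟩ := abs_le.mp hcR
  obtain ⟨hd₁, hd₂⟩ := abs_le.mp hdR
  by_cases hP : a + b - c - d = 0
  · have hab : a + b ≠ 0 := fun h ↦ hS (by linarith)
    have hR : 1 ≤ R := by
      by_cases ha0 : a = 0
      · exact (hb.one_le_abs (by simpa [ha0] using hab)).trans hbR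
      · exact (ha.one_le_abs ha0).trans haR
    have h2 := one_le_mul_abs_add ha hb haR hbR hab
    have hR7 : R ≤ R ^ 7 := le_self_pow₀ hR (by norm_num)
    rw [show a + b + c + d = 2 * (a + b) by linarith, abs_mul, abs_two]
    nlinarith [abs_nonneg (a + b)]
  · have hSP : (a + b + c + d) * (a + b - c - d)
        = (a ^ 2 + b ^ 2 - c ^ 2 - d ^ 2) + 2 * (a * b) + -(2 * (c * d)) := by ring
    have hT := one_le_mul_abs_add_add
      (.of_mem_range (sub_mem (sub_mem (add_mem ha hb) hc) hd))
      (ha.mul hb).two_mul (hc.mul hd).two_mul.neg ?_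
      (abs_two_mul_mul_le haR hbR) ((abs_neg _).trans_le (abs_two_mul_mul_le hcR hdR))
      (hSP ▸ mul_ne_zero hS hP)
    · calc 1 ≤ 12 * (2 * R ^ 2) ^ 3 * (4 * R) * |a + b + c + d| :=
            one_le_mul_mul_abs_of_mul_eq hSP (abs_le.mpr ⟨by linarith, by linarith⟩) hT
        _ = 384 * R ^ 7 * |a + b + c + d| := by ring
    · refine abs_le.mpr ⟨?_, ?_⟩ <;>
        nlinarith [sq_le_sq' ha₁ ha₂, sq_le_sq' hb₁ hb₂, sq_le_sq' hc₁ hc₂,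
          sq_le_sq' hd₁ hd₂]

end SumOfIntSqrts

lemma rpow_neg_natCast_div_two {x : ℝ} (hx : 0 ≤ x) (k : ℕ) :
    x ^ (-(k : ℝ) / 2) = (√x ^ k)⁻¹ := by
  rw [neg_div, rpow_neg hx, sqrt_eq_rpow, ← rpow_natCast, ← rpow_mul hx]
  ring_nf

theorem four_sqrt_spacing :
    ∃ c : ℝ, 0 < c ∧ ∀ n m k l : ℕ, 0 < n → 0 < m → 0 < k → 0 < l →
      ∀ σ : ℝ, (σ = 1 ∨ σ = -1) →
        Real.sqrt n + Real.sqrt m + σ * Real.sqrt k - Real.sqrt l ≠ 0 →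
          c * ((max (max n m) (max k l) : ℕ) : ℝ) ^ (-(7 : ℝ) / 2) ≤
            |Real.sqrt n + Real.sqrt m + σ * Real.sqrt k - Real.sqrt l| := by
  refine ⟨1 / 384, by norm_num, fun n m k l _ _ _ _ σ hσ hS ↦ ?_⟩
  set N := max (max n m) (max k l)
  have hle : ∀ j ≤ N, |√(j : ℝ)| ≤ √N := fun j hj ↦ by
    rw [abs_of_nonneg (sqrt_nonneg _)]
    exact sqrt_le_sqrt (by exact_mod_cast hj)
  have hσ' : IsIntSqrt σ ∧ |σ| = 1 := by
    rcases hσ with rfl | rfl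
    exacts [⟨.of_mem_range ⟨1, by simp⟩, by simp⟩,
      ⟨.of_mem_range ⟨-1, by simp⟩, by simp⟩]
  rw [sub_eq_add_neg] at hS ⊢
  have hspacing := one_le_mul_abs_add_add_add
    (isIntSqrt_sqrt_natCast n) (isIntSqrt_sqrt_natCast m)
    (hσ'.1.mul (isIntSqrt_sqrt_natCast k)) (isIntSqrt_sqrt_natCast l).neg
    (hle n (by omega)) (hle m (by omega))
    (by rw [abs_mul, hσ'.2, one_mul]; exact hle k (by omega))
    (by rw [abs_neg]; exact hle l (by omega)) hS
  have hR : 0 < √(N : ℝ) ^ 7 := by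
    refine (pow_nonneg (sqrt_nonneg _) 7).lt_of_ne fun h ↦ ?_
    rw [← h] at hspacing
    norm_num at hspacing
  have hpow := rpow_neg_natCast_div_two N.cast_nonneg 7
  rw [Nat.cast_ofNat] at hpow
  rw [hpow, one_div, ← mul_inv, inv_le_iff_one_le_mul₀ (by positivity)]
  linarith
end

section
/- There exists an absolute constant c > 0 such that for all positive integers n, m, k, l, r, s, t, j and each sign σ ∈ {+1, −1}, if √n + √m + √k + √l + σ·√r − √s − √t − √j ≠ 0 then |√n + √m + √k + √l + σ·√r − √s − √t − √j| ≥ c · max(n, m, k, l, r, s, t, j)^{−127/2}. -/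
/-!
Let `α = ±√a₁ ± ⋯ ± √a₈ ≠ 0` and let `P = ∏ (X - s)`, the product over all `2⁸` signed
sums `s` of the `√aᵢ`. Adjoining one square root at a time, `P(X - √a) P(X + √a)` is even
in `√a`, so `P` has integer coefficients. Its lowest nonzero coefficient is, up to sign, the
product of its nonzero roots, hence at least `1` in absolute value. Both `α` and `-α` are
roots and every root is at most `8 √N` in absolute value, where `N = max aᵢ`; thus
`1 ≤ α² (8 √N)²⁵⁴`.
-/

open Polynomial

section Conjugate

variable {R S : Type*} [CommRing R] [CommRing S] (f : R →+* S) {a : S} {q : R}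

theorem exists_map_comp_X_sub_C_eq_add (ha : a ^ 2 = f q) (p : R[X]) :
    ∃ A B : R[X], (p.map f).comp (X - C a) = A.map f + C a * B.map f ∧
      (p.map f).comp (X + C a) = A.map f - C a * B.map f := by
  induction p using Polynomial.recOnHorner with
  | M0 => exact ⟨0, 0, by simp, by simp⟩
  | MC p c _ _ ih =>
    obtain ⟨A, B, h₁, h₂⟩ := ih
    refine ⟨A + C c, B, ?_, ?_⟩
    · rw [Polynomial.map_add, add_comp, h₁, map_C, C_comp, Polynomial.map_add, map_C]; ring
    · rw [Polynomial.map_add, add_comp, h₂, map_C, C_comp, Polynomial.map_add, map_C]; ring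
  | MX p _ ih =>
    obtain ⟨A, B, h₁, h₂⟩ := ih
    have hC : C a * C a = C (f q) := by rw [← C_mul, ← sq, ha]
    refine ⟨A * X - C q * B, B * X - A, ?_, ?_⟩
    · simp only [Polynomial.map_mul, Polynomial.map_sub, map_X, map_C, mul_comp, X_comp, h₁]
      linear_combination (-B.map f) * hC
    · simp only [Polynomial.map_mul, Polynomial.map_sub, map_X, map_C, mul_comp, X_comp, h₂]
      linear_combination (-B.map f) * hC

theorem comp_X_sub_C_mul_comp_X_add_C_mem_lifts (ha : a ^ 2 = f q) {p : S[X]}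
    (hp : p ∈ lifts f) : p.comp (X - C a) * p.comp (X + C a) ∈ lifts f := by
  obtain ⟨P, rfl⟩ := (mem_lifts p).1 hp
  obtain ⟨A, B, h₁, h₂⟩ := exists_map_comp_X_sub_C_eq_add f ha P
  have hC : C a * C a = C (f q) := by rw [← C_mul, ← sq, ha]
  refine (mem_lifts _).2 ⟨A * A - C q * (B * B), ?_⟩
  simp only [h₁, h₂, Polynomial.map_sub, Polynomial.map_mul, map_C]
  linear_combination (B.map f * B.map f) * hC

end Conjugate

section SignedSums

variable {R : Type*}

def signedSums [AddCommGroup R] : List R → Multiset R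
  | [] => {0}
  | a :: L => (signedSums L).map (· + a) + (signedSums L).map (· - a)

section AddCommGroup

variable [AddCommGroup R] {L : List R} {s : R}

@[simp]
theorem card_signedSums (L : List R) : Multiset.card (signedSums L) = 2 ^ L.length := by
  induction L with
  | nil => rfl
  | cons a L ih => simp [signedSums, ih, pow_succ, mul_two]

theorem add_mem_signedSums_cons (a : R) (hs : s ∈ signedSums L) : s + a ∈ signedSums (a :: L) :=
  Multiset.mem_add.2 (Or.inl (Multiset.mem_map_of_mem _ hs))

theorem sub_mem_signedSums_cons (a : R) (hs : s ∈ signedSums L) : s - a ∈ signedSums (a :: L) :=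
  Multiset.mem_add.2 (Or.inr (Multiset.mem_map_of_mem _ hs))

theorem neg_mem_signedSums (hs : s ∈ signedSums L) : -s ∈ signedSums L := by
  induction L generalizing s with
  | nil => simp_all [signedSums]
  | cons a L ih =>
    simp only [signedSums, Multiset.mem_add, Multiset.mem_map] at hs
    rcases hs with ⟨s, hs, rfl⟩ | ⟨s, hs, rfl⟩
    · simpa [sub_eq_add_neg, add_comm] using sub_mem_signedSums_cons a (ih hs)
    · simpa [sub_eq_add_neg, add_comm] using add_mem_signedSums_cons a (ih hs)

theorem abs_le_sum_of_mem_signedSums [LinearOrder R] [IsOrderedAddMonoid R]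
    (hs : s ∈ signedSums L) : |s| ≤ (L.map abs).sum := by
  induction L generalizing s with
  | nil => simp_all [signedSums]
  | cons a L ih =>
    simp only [signedSums, Multiset.mem_add, Multiset.mem_map] at hs
    rw [List.map_cons, List.sum_cons]
    rcases hs with ⟨s, hs, rfl⟩ | ⟨s, hs, rfl⟩
    · grw [abs_add_le, ih hs, add_comm]
    · grw [abs_sub, ih hs, add_comm]

end AddCommGroup

variable [CommRing R]

theorem prod_X_sub_C_signedSums_cons (a : R) (L : List R) :
    ((signedSums (a :: L)).map (X - C ·)).prod =
      ((signedSums L).map (X - C ·)).prod.comp (X - C a) *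
        ((signedSums L).map (X - C ·)).prod.comp (X + C a) := by
  simp only [signedSums, Multiset.map_add, Multiset.prod_add, multiset_prod_comp,
    Multiset.map_map, Function.comp_def, sub_comp, X_comp, C_comp, C_add, C_sub]
  congr 2 <;> exact Multiset.map_congr rfl fun s _ => by ring

theorem prod_X_sub_C_signedSums_mem_lifts {S : Type*} [CommRing S] (f : S →+* R) {L : List R}
    (hL : ∀ a ∈ L, ∃ q, a ^ 2 = f q) : ((signedSums L).map (X - C ·)).prod ∈ lifts f := by
  induction L with
  | nil => simpa [signedSums] using X_mem_lifts f
  | cons a L ih =>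
    obtain ⟨q, hq⟩ := hL a List.mem_cons_self
    rw [prod_X_sub_C_signedSums_cons]
    exact comp_X_sub_C_mul_comp_X_add_C_mem_lifts f hq
      (ih fun b hb => hL b (List.mem_cons_of_mem a hb))

end SignedSums

theorem trailingCoeff_X_sub_C_of_ne_zero {R : Type*} [Ring R] {s : R} (hs : s ≠ 0) :
    (X - C s).trailingCoeff = -s := by
  rw [trailingCoeff_eq_coeff_zero] <;> simp [hs]

section LinearOrderedRing

variable {R : Type*} [CommRing R] [LinearOrder R] [IsStrictOrderedRing R]

theorem one_le_abs_trailingCoeff_of_mem_lifts {p : R[X]} (hp : p ∈ lifts (Int.castRingHom R))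
    (hp0 : p ≠ 0) : 1 ≤ |p.trailingCoeff| := by
  obtain ⟨z, hz⟩ := (lifts_iff_coeff_lifts p).1 hp p.natTrailingDegree
  have hz0 : z ≠ 0 := by
    rintro rfl
    exact hp0 (trailingCoeff_eq_zero.1 (by simpa [trailingCoeff] using hz.symm))
  rw [trailingCoeff, ← hz, eq_intCast, ← Int.cast_abs]
  exact_mod_cast Int.one_le_abs hz0

theorem abs_trailingCoeff_X_sub_C_le (s : R) : |(X - C s).trailingCoeff| ≤ max 1 |s| := by
  rcases eq_or_ne s 0 with rfl | hs
  · simp [trailingCoeff, natTrailingDegree_X]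
  · simp [trailingCoeff_X_sub_C_of_ne_zero hs]

theorem abs_trailingCoeff_prod_X_sub_C_le_pow {E : Multiset R} {M : R} (hM : 1 ≤ M)
    (hE : ∀ s ∈ E, |s| ≤ M) :
    |(E.map (X - C ·)).prod.trailingCoeff| ≤ M ^ Multiset.card E := by
  induction E using Multiset.induction_on with
  | empty => simp [trailingCoeff]
  | cons s E ih =>
    rw [Multiset.map_cons, Multiset.prod_cons, trailingCoeff_mul, abs_mul, Multiset.card_cons,
      pow_succ']
    gcongr
    · exact (abs_trailingCoeff_X_sub_C_le s).trans
        (max_le hM (hE s (Multiset.mem_cons_self s E)))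
    · exact ih fun t ht => hE t (Multiset.mem_cons_of_mem ht)

theorem one_le_sq_mul_pow_card_sub_two {D : Multiset R}
    (hD : (D.map (X - C ·)).prod ∈ lifts (Int.castRingHom R)) {M : R} (hM : 1 ≤ M)
    (hDM : ∀ s ∈ D, |s| ≤ M) {α : R} (hα0 : α ≠ 0) (hα : α ∈ D) (hnα : -α ∈ D) :
    1 ≤ α ^ 2 * M ^ (Multiset.card D - 2) := by
  obtain ⟨E', rfl⟩ := Multiset.exists_cons_of_mem hα
  obtain ⟨E, rfl⟩ := Multiset.exists_cons_of_mem <|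
    (Multiset.mem_cons.1 hnα).resolve_left (neg_ne_self.2 hα0)
  have hprod : (X - C α) * ((X - C (-α)) * (E.map (X - C ·)).prod) ≠ 0 :=
    (monic_X_sub_C α).mul ((monic_X_sub_C _).mul (monic_multiset_prod_of_monic _ _
      fun s _ => monic_X_sub_C s)) |>.ne_zero
  have htc := one_le_abs_trailingCoeff_of_mem_lifts
    (by simpa only [Multiset.map_cons, Multiset.prod_cons] using hD) hprod
  rw [trailingCoeff_mul, trailingCoeff_mul,
    trailingCoeff_X_sub_C_of_ne_zero hα0, trailingCoeff_X_sub_C_of_ne_zero (neg_ne_zero.2 hα0),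
    ← mul_assoc, abs_mul] at htc
  have hE := abs_trailingCoeff_prod_X_sub_C_le_pow hM fun s hs =>
    hDM s (Multiset.mem_cons_of_mem (Multiset.mem_cons_of_mem hs))
  calc 1 ≤ |-α * -(-α)| * |(E.map (X - C ·)).prod.trailingCoeff| := htc
    _ ≤ α ^ 2 * M ^ Multiset.card E := by
      rw [neg_neg, neg_mul, abs_neg, abs_mul_self, ← sq]
      gcongr
    _ = α ^ 2 * M ^ (Multiset.card (α ::ₘ -α ::ₘ E) - 2) := by simp

end LinearOrderedRing

theorem one_le_sq_mul_pow_of_mem_signedSums_sqrt {ns : List ℕ} {N : ℕ} (hN : 0 < N)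
    (hns : ∀ x ∈ ns, x ≤ N) {α : ℝ} (hα0 : α ≠ 0)
    (hα : α ∈ signedSums (ns.map fun x : ℕ => √(x : ℝ))) :
    1 ≤ α ^ 2 * (ns.length * √N) ^ (2 ^ ns.length - 2) := by
  have hlen : 1 ≤ ns.length := by
    rcases ns with _ | ⟨x, ns⟩
    · exact absurd (Multiset.mem_singleton.1 hα) hα0
    · simp
  have hM : 1 ≤ ns.length * √N :=
    one_le_mul_of_one_le_of_one_le (by exact_mod_cast hlen)
      (Real.one_le_sqrt.2 (by exact_mod_cast hN))
  have hbound :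
      ∀ s ∈ signedSums (ns.map fun x : ℕ => √(x : ℝ)), |s| ≤ ns.length * √N := by
    intro s hs
    refine (abs_le_sum_of_mem_signedSums hs).trans ?_
    have hle : ∀ y ∈ (ns.map fun x : ℕ => √(x : ℝ)).map abs, y ≤ √N := by
      simp only [List.map_map, List.mem_map, Function.comp_apply,
        abs_of_nonneg (Real.sqrt_nonneg _)]
      rintro _ ⟨x, hx, rfl⟩
      exact Real.sqrt_le_sqrt (by exact_mod_cast hns x hx)
    simpa using List.sum_le_card_nsmul _ _ hle
  have hsq : ∀ a ∈ ns.map fun x : ℕ => √(x : ℝ), ∃ q : ℤ, a ^ 2 = q := by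
    simp only [List.mem_map]
    rintro _ ⟨x, -, rfl⟩
    exact ⟨x, by simp⟩
  simpa using one_le_sq_mul_pow_card_sub_two
    (prod_X_sub_C_signedSums_mem_lifts _ hsq) hM hbound hα0 hα
    (neg_mem_signedSums hα)

theorem inv_pow_mul_rpow_le_abs_of_one_le_sq_mul {α c x : ℝ} (hc : 0 < c) (hx : 0 < x) (k : ℕ)
    (h : 1 ≤ α ^ 2 * (c * √x) ^ (2 * k)) : (c ^ k)⁻¹ * x ^ (-(k : ℝ) / 2) ≤ |α| := by
  have hpos : 0 < (c * √x) ^ k := by positivity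
  have hx' : x ^ (-(k : ℝ) / 2) = (√x ^ k)⁻¹ := by
    rw [Real.sqrt_eq_rpow, ← Real.rpow_natCast, ← Real.rpow_mul hx.le, ← Real.rpow_neg hx.le]
    ring_nf
  rw [hx', ← mul_inv, ← mul_pow, inv_le_iff_one_le_mul₀ hpos]
  rw [pow_mul', ← sq_abs, ← mul_pow] at h
  exact ((one_le_sq_iff_one_le_abs _).1 h).trans_eq (abs_of_nonneg (by positivity))

theorem eight_sqrt_spacing :
    ∃ c : ℝ, 0 < c ∧ ∀ n m k l r s t j : ℕ,
      0 < n → 0 < m → 0 < k → 0 < l → 0 < r → 0 < s → 0 < t → 0 < j →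
      ∀ σ : ℝ, (σ = 1 ∨ σ = -1) →
        Real.sqrt n + Real.sqrt m + Real.sqrt k + Real.sqrt l + σ * Real.sqrt r -
            Real.sqrt s - Real.sqrt t - Real.sqrt j ≠ 0 →
          c * ((max (max (max n m) (max k l)) (max (max r s) (max t j)) : ℕ) : ℝ) ^
              (-(127 : ℝ) / 2) ≤
            |Real.sqrt n + Real.sqrt m + Real.sqrt k + Real.sqrt l + σ * Real.sqrt r -
              Real.sqrt s - Real.sqrt t - Real.sqrt j| := by
  refine ⟨(8 ^ 127)⁻¹, by positivity, ?_⟩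
  intro n m k l r s t j hn _ _ _ _ _ _ _ σ hσ hne
  set N := max (max (max n m) (max k l)) (max (max r s) (max t j))
  have hmem : √n + √m + √k + √l + σ * √r - √s - √t - √j ∈
      signedSums [√(n : ℝ), √m, √k, √l, √r, √s, √t, √j] := by
    have hneg : 0 - √j - √t - √s ∈ signedSums [√(s : ℝ), √t, √j] :=
      sub_mem_signedSums_cons _ <| sub_mem_signedSums_cons _ <|
        sub_mem_signedSums_cons _ (Multiset.mem_singleton_self 0)
    have hpos {x : ℝ} (hx : x ∈ signedSums [√(r : ℝ), √s, √t, √j]) :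
        x + √l + √k + √m + √n ∈ signedSums [√(n : ℝ), √m, √k, √l, √r, √s, √t, √j] :=
      add_mem_signedSums_cons _ <| add_mem_signedSums_cons _ <|
        add_mem_signedSums_cons _ <| add_mem_signedSums_cons _ hx
    rcases hσ with rfl | rfl
    · convert hpos (add_mem_signedSums_cons _ hneg) using 1; ring
    · convert hpos (sub_mem_signedSums_cons _ hneg) using 1; ring
  have hle : ∀ x ∈ [n, m, k, l, r, s, t, j], x ≤ N := by
    simp only [List.forall_mem_cons, List.not_mem_nil, IsEmpty.forall_iff, implies_true, and_true]
    omega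
  have key := one_le_sq_mul_pow_of_mem_signedSums_sqrt (by omega) hle hne hmem
  norm_num at key
  exact inv_pow_mul_rpow_le_abs_of_one_le_sq_mul (by norm_num) (by positivity) 127 key
end
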